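/- arXiv:2308.12399 — 5 statements merged into one kernel-verified Lean document; each statement's English description precedes it below -/
import Mathlib

section
/- For any simple graphs G and H that allow loops, the SNT-rank of their disjoint union satisfies st_+(G ∪ H) = st_+(G) + st_+(H). In particular, st_+(G ∪ K_1) = st_+(G), where K_1 is a single vertex with no loop. -/
open Matrix

/-- A finite simple undirected graph that allows loops: a symmetric adjacency
relation on the vertex type. -/
structure LGraph (V : Type*) where
  /-- the adjacency relation; `Adj v v` means a loop at `v`. -/
  Adj : V → V → Prop
  /-- adjacency is symmetric -/
  symm : ∀ {u v : V}, Adj u v → Adj v u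

namespace LGraph

variable {V W : Type*}

/-- `𝒞` is a set-join cover of `G`: all components are nonempty subsets of the
vertex set, and the union of the edge sets of the set-joins `K ∨ L` in `𝒞` is
exactly the edge set of `G`. A set-join is represented as an unordered pair
`s(K, L)` of subsets of the vertex set. -/
def IsSetJoinCover (G : LGraph V) (𝒞 : Set (Sym2 (Set V))) : Prop :=
  (∀ p ∈ 𝒞, ∀ K ∈ p, (K : Set V).Nonempty) ∧
    ∀ u v : V, G.Adj u v ↔ ∃ p ∈ 𝒞, ∃ K L : Set V, p = s(K, L) ∧ u ∈ K ∧ v ∈ L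

/-- The component set `V(𝒞)` of a set-join cover: all subsets of the vertex set
appearing as a component of some set-join in `𝒞`. -/
def comps (𝒞 : Set (Sym2 (Set V))) : Set (Set V) :=
  {K : Set V | ∃ p ∈ 𝒞, K ∈ p}

/-- The order `|𝒞|` of a set-join cover: the number of its components. -/
noncomputable def coverOrder (𝒞 : Set (Sym2 (Set V))) : ℕ :=
  (comps 𝒞).ncard

/-- The SNT-rank `st₊(G)` of a graph: the minimal order of a set-join cover of `G`. -/
noncomputable def st (G : LGraph V) : ℕ :=
  sInf {k : ℕ | ∃ 𝒞 : Set (Sym2 (Set V)), G.IsSetJoinCover 𝒞 ∧ coverOrder 𝒞 = k}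

/-- An optimal set-join cover (OSJ cover): a set-join cover of order `st₊(G)`. -/
def IsOptimalCover (G : LGraph V) (𝒞 : Set (Sym2 (Set V))) : Prop :=
  G.IsSetJoinCover 𝒞 ∧ coverOrder 𝒞 = G.st

/-- The graph `G(𝒞)` of a set-join cover: vertices are the components, and two
components `K`, `L` are adjacent iff the set-join `K ∨ L` belongs to `𝒞`. -/
def coverGraph (𝒞 : Set (Sym2 (Set V))) : LGraph (comps 𝒞) where
  Adj K L := s((K : Set V), (L : Set V)) ∈ 𝒞
  symm := by
    intro K L h
    rwa [Sym2.eq_swap] at h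

/-- The neighbourhood of a vertex (`v ∈ neighborSet v` iff `v` has a loop). -/
def neighborSet (G : LGraph V) (v : V) : Set V := {w | G.Adj v w}

/-- The induced subgraph on a set of vertices. -/
def induce (G : LGraph V) (S : Set V) : LGraph S where
  Adj a b := G.Adj (a : V) (b : V)
  symm := by intro a b h; exact G.symm h

/-- Adjacency for the disjoint union of two graphs. -/
def disjUnionAdj (G : LGraph V) (H : LGraph W) : V ⊕ W → V ⊕ W → Prop
  | Sum.inl a, Sum.inl b => G.Adj a b
  | Sum.inr a, Sum.inr b => H.Adj a b
  | _, _ => False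

/-- The disjoint union `G ∪ H` of two graphs. -/
def disjUnion (G : LGraph V) (H : LGraph W) : LGraph (V ⊕ W) where
  Adj := disjUnionAdj G H
  symm := by
    rintro (a | a) (b | b) h
    · exact G.symm h
    · exact h.elim
    · exact h.elim
    · exact H.symm h

/-- The graph with no edges on vertex type `V`. -/
def emptyGraph (V : Type*) : LGraph V where
  Adj _ _ := False
  symm := by intro u v h; exact h

/-- Adjacency for the join of a graph with a single looped vertex `none`. -/
def joinK1ℓAdj (G : LGraph V) : Option V → Option V → Prop
  | some a, some b => G.Adj a b
  | _, _ => True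

/-- The join `G ∨ K₁ˡ` of `G` with a single looped vertex (the vertex `none`). -/
def joinK1ℓ (G : LGraph V) : LGraph (Option V) where
  Adj := joinK1ℓAdj G
  symm := by
    rintro (_ | a) (_ | b) h
    · trivial
    · trivial
    · trivial
    · exact G.symm h

/-- The complete loopless graph `Kₙ` on `Fin n`. -/
def completeGraph (n : ℕ) : LGraph (Fin n) where
  Adj i j := i ≠ j
  symm := by intro i j h; exact h.symm

/-- The path `Pₙ` on `n` vertices (no loops). -/
def pathGraph (n : ℕ) : LGraph (Fin n) where
  Adj i j := (i : ℕ) + 1 = (j : ℕ) ∨ (j : ℕ) + 1 = (i : ℕ)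
  symm := by intro i j h; exact h.symm

/-- The cycle `Cₙ` on `n` vertices (no loops), for `n ≥ 3`. -/
def cycleGraph (n : ℕ) : LGraph (Fin n) where
  Adj i j := ((i : ℕ) + 1) % n = (j : ℕ) ∨ ((j : ℕ) + 1) % n = (i : ℕ)
  symm := by intro i j h; exact h.symm

/-- Adjacency for the generalised star: the centre is `none`, and `some ⟨i, j⟩`
is the vertex at distance `j + 1` from the centre on arm `i`. -/
def genStarAdj (t : ℕ) (k : Fin t → ℕ) :
    Option ((i : Fin t) × Fin (k i)) → Option ((i : Fin t) × Fin (k i)) → Prop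
  | none, none => False
  | none, some ⟨_, j⟩ => (j : ℕ) = 0
  | some ⟨_, j⟩, none => (j : ℕ) = 0
  | some ⟨i, j⟩, some ⟨i', j'⟩ => i = i' ∧ ((j : ℕ) + 1 = (j' : ℕ) ∨ (j' : ℕ) + 1 = (j : ℕ))

/-- The generalised star `star(k₁, …, k_t)` with central vertex `none` and `t`
arms, the `i`-th arm being a path with `k i` edges emanating from the centre. -/
def genStar (t : ℕ) (k : Fin t → ℕ) : LGraph (Option ((i : Fin t) × Fin (k i))) where
  Adj := genStarAdj t k
  symm := by
    rintro (_ | ⟨i, j⟩) (_ | ⟨i', j'⟩) h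
    · exact h.elim
    · exact h
    · exact h
    · exact ⟨h.1.symm, h.2.symm⟩

/-- A loopless leaf: a vertex with exactly one neighbour and no loop. -/
def LooplessLeaf (G : LGraph V) (v : V) : Prop :=
  ¬ G.Adj v v ∧ ∃ w : V, G.neighborSet v = {w}

/-- Delete from `G` all edges incident to the vertex `w`. -/
def deleteVertexEdges (G : LGraph V) (w : V) : LGraph V where
  Adj u v := G.Adj u v ∧ u ≠ w ∧ v ≠ w
  symm := by intro u v h; exact ⟨G.symm h.1, h.2.2, h.2.1⟩

/-- A graph is twin-free if no two distinct vertices have the same neighbourhood. -/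
def TwinFree (G : LGraph V) : Prop :=
  ∀ u v : V, G.neighborSet u = G.neighborSet v → u = v

/-- `G` has a unique optimal set-join cover. -/
def HasUniqueOptimalCover (G : LGraph V) : Prop :=
  ∃! 𝒞 : Set (Sym2 (Set V)), G.IsSetJoinCover 𝒞 ∧ coverOrder 𝒞 = G.st

/-- The cover graphs of two set-join covers are isomorphic. -/
def CoverGraphIso (𝒞 : Set (Sym2 (Set V))) (𝒟 : Set (Sym2 (Set W))) : Prop :=
  ∃ e : comps 𝒞 ≃ comps 𝒟,
    ∀ K L : comps 𝒞, (coverGraph 𝒞).Adj K L ↔ (coverGraph 𝒟).Adj (e K) (e L)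

/-- All optimal set-join covers of `G` have isomorphic cover graphs. -/
def HasUniqueOSJCoverGraph (G : LGraph V) : Prop :=
  ∀ 𝒞 𝒟 : Set (Sym2 (Set V)),
    G.IsOptimalCover 𝒞 → G.IsOptimalCover 𝒟 → CoverGraphIso 𝒞 𝒟

/-- Entrywise nonnegativity of a real matrix. -/
def EntrywiseNonneg {m n : Type*} (A : Matrix m n ℝ) : Prop :=
  ∀ i j, 0 ≤ A i j

/-- The SNT-rank `st₊(A)` of a matrix: the minimal `k` such that `A = B * C * Bᵀ`
with `B` an entrywise nonnegative `n × k` matrix and `C` a symmetric entrywise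
nonnegative `k × k` matrix. -/
noncomputable def stM {V : Type*} [Fintype V] (A : Matrix V V ℝ) : ℕ :=
  sInf {k : ℕ | ∃ B : Matrix V (Fin k) ℝ, ∃ C : Matrix (Fin k) (Fin k) ℝ,
    EntrywiseNonneg B ∧ C.IsSymm ∧ EntrywiseNonneg C ∧ A = B * C * Bᵀ}

/-- The SNT-rank `st₊(G)` of a graph defined via matrices: the minimum of
`st₊(A)` over all symmetric entrywise nonnegative matrices `A` whose pattern
graph is `G`. -/
noncomputable def stMGraph {V : Type*} [Fintype V] (G : LGraph V) : ℕ :=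
  sInf {k : ℕ | ∃ A : Matrix V V ℝ, A.IsSymm ∧ EntrywiseNonneg A ∧
    (∀ i j, G.Adj i j ↔ 0 < A i j) ∧ stM A = k}

/-- The loopy graph associated with a simple graph. -/
def _root_.SimpleGraph.toLGraph (G : SimpleGraph V) : LGraph V where
  Adj := G.Adj
  symm := by intro u v h; exact G.adj_symm h

/-- The edge star cover number `starc(G)` of a loopless simple graph: the minimal
number of stars (given by a centre and a nonempty set of leaves not containing
the centre) whose edge sets have union exactly `E(G)`. -/
noncomputable def starCoverNumber (G : SimpleGraph V) : ℕ :=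
  sInf {k : ℕ | ∃ f : Fin k → V × Set V,
    (∀ i, (f i).2.Nonempty ∧ (f i).1 ∉ (f i).2) ∧
    ∀ u v : V, G.Adj u v ↔
      ∃ i, (u = (f i).1 ∧ v ∈ (f i).2) ∨ (v = (f i).1 ∧ u ∈ (f i).2)}

/-!
Block-diagonal factorizations give `st₊(G ∪ H) ≤ st₊(G) + st₊(H)`. Conversely, let
`A = B C Bᵀ` be an optimal SN-Trifactorization of a matrix realizing `G ∪ H`, and let `S`, `T` be
the columns of `B` that are nonzero on some row of `V`, resp. of `W`. All terms
`B u p * C p q * B u' q` are nonnegative and `A` vanishes on `V × W`, so `C` vanishes on `S × T`.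
Hence the `V`-block of `A` only involves the columns `S \ T` and the `W`-block only the columns
`T`, which gives `st₊(G) + st₊(H) ≤ |S \ T| + |T| ≤ st₊(A)`.
-/

def IsSNTrifactorization {n ι : Type*} [Fintype ι] (A : Matrix n n ℝ) (B : Matrix n ι ℝ)
    (C : Matrix ι ι ℝ) : Prop :=
  EntrywiseNonneg B ∧ C.IsSymm ∧ EntrywiseNonneg C ∧ A = B * C * Bᵀ

section Trifactorization

variable {n ι κ : Type*} [Fintype ι] [Fintype κ] {A : Matrix n n ℝ} {B : Matrix n ι ℝ}
  {C : Matrix ι ι ℝ}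

lemma mul_mul_transpose_apply (B : Matrix n ι ℝ) (C : Matrix ι ι ℝ) (i j : n) :
    (B * C * Bᵀ) i j = ∑ q, ∑ p, B i p * C p q * B j q := by
  simp only [mul_apply, transpose_apply, Finset.sum_mul]

lemma IsSNTrifactorization.reindex (h : IsSNTrifactorization A B C) (e : ι ≃ κ) :
    IsSNTrifactorization A (B.submatrix id e.symm) (C.submatrix e.symm e.symm) := by
  obtain ⟨hB, hCs, hC, rfl⟩ := h
  refine ⟨fun _ _ => hB _ _, hCs.submatrix _, fun _ _ => hC _ _, ?_⟩
  rw [transpose_submatrix, submatrix_mul_equiv, submatrix_mul_equiv, submatrix_id_id]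

lemma IsSNTrifactorization.stM_le [Fintype n] (h : IsSNTrifactorization A B C) :
    stM A ≤ Fintype.card ι := by
  classical
  rw [stM]
  exact Nat.sInf_le ⟨_, _, h.reindex (Fintype.equivFin ι)⟩

lemma isSNTrifactorization_one [Fintype n] [DecidableEq n] (hs : A.IsSymm)
    (hn : EntrywiseNonneg A) : IsSNTrifactorization A 1 A := by
  refine ⟨fun i j => ?_, hs, hn, by rw [transpose_one, Matrix.mul_one, Matrix.one_mul]⟩
  rw [one_apply]
  split_ifs <;> norm_num

lemma exists_isSNTrifactorization_stM [Fintype n] (hs : A.IsSymm) (hn : EntrywiseNonneg A) :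
    ∃ (B : Matrix n (Fin (stM A)) ℝ) (C : Matrix (Fin (stM A)) (Fin (stM A)) ℝ),
      IsSNTrifactorization A B C := by
  classical
  have hne : {k | ∃ (B : Matrix n (Fin k) ℝ) (C : Matrix (Fin k) (Fin k) ℝ),
      IsSNTrifactorization A B C}.Nonempty :=
    ⟨_, _, _, (isSNTrifactorization_one hs hn).reindex (Fintype.equivFin n)⟩
  exact Nat.sInf_mem hne

lemma mul_mul_transpose_apply_eq_zero (hB : EntrywiseNonneg B) (hC : EntrywiseNonneg C)
    {i j : n} (h : (B * C * Bᵀ) i j = 0) (p q : ι) : B i p * C p q * B j q = 0 := by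
  have hterm : ∀ p q, 0 ≤ B i p * C p q * B j q := fun p q =>
    mul_nonneg (mul_nonneg (hB _ _) (hC _ _)) (hB _ _)
  rw [mul_mul_transpose_apply, Fintype.sum_eq_zero_iff_of_nonneg
    fun q => Fintype.sum_nonneg fun p => hterm p q] at h
  exact congrFun ((Fintype.sum_eq_zero_iff_of_nonneg fun p => hterm p q).1 (congrFun h q)) p

lemma IsSNTrifactorization.submatrix {m : Type*} (h : IsSNTrifactorization A B C) (f : m → n)
    (s : Finset ι) (hs : ∀ u u' p q, p ∉ s → B (f u) p * C p q * B (f u') q = 0) :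
    IsSNTrifactorization (A.submatrix f f) (B.submatrix f ((↑) : s → ι))
      (C.submatrix ((↑) : s → ι) ((↑) : s → ι)) := by
  classical
  obtain ⟨hB, hCs, hC, rfl⟩ := h
  refine ⟨fun _ _ => hB _ _, hCs.submatrix _, fun _ _ => hC _ _, ?_⟩
  ext u u'
  have hs' : ∀ p q, q ∉ s → B (f u) p * C p q * B (f u') q = 0 := fun p q hq => by
    convert hs u' u q p hq using 1
    rw [hCs.apply p q]
    ring
  simp only [submatrix_apply, mul_mul_transpose_apply]
  rw [← Finset.sum_subset s.subset_univ fun q _ hq => Finset.sum_eq_zero fun p _ => hs' p q hq,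
    ← Finset.sum_coe_sort s]
  refine Finset.sum_congr rfl fun q _ => ?_
  rw [← Finset.sum_subset s.subset_univ fun p _ hp => hs u u' p q hp, ← Finset.sum_coe_sort s]

end Trifactorization

section Blocks

variable {V W : Type*}

lemma EntrywiseNonneg.zero {m n : Type*} : EntrywiseNonneg (0 : Matrix m n ℝ) :=
  fun _ _ => le_rfl

lemma EntrywiseNonneg.fromBlocks {l m n o : Type*} {A : Matrix n l ℝ} {B : Matrix n m ℝ}
    {C : Matrix o l ℝ} {D : Matrix o m ℝ} (hA : EntrywiseNonneg A) (hB : EntrywiseNonneg B)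
    (hC : EntrywiseNonneg C) (hD : EntrywiseNonneg D) :
    EntrywiseNonneg (fromBlocks A B C D)
  | .inl i, .inl j => hA i j
  | .inl i, .inr j => hB i j
  | .inr i, .inl j => hC i j
  | .inr i, .inr j => hD i j

lemma IsSNTrifactorization.fromBlocks {ι κ : Type*} [Fintype ι] [Fintype κ] {A₁ : Matrix V V ℝ}
    {A₂ : Matrix W W ℝ} {B₁ : Matrix V ι ℝ} {B₂ : Matrix W κ ℝ} {C₁ : Matrix ι ι ℝ}
    {C₂ : Matrix κ κ ℝ} (h₁ : IsSNTrifactorization A₁ B₁ C₁)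
    (h₂ : IsSNTrifactorization A₂ B₂ C₂) :
    IsSNTrifactorization (fromBlocks A₁ 0 0 A₂) (fromBlocks B₁ 0 0 B₂)
      (fromBlocks C₁ 0 0 C₂) := by
  obtain ⟨hB₁, hCs₁, hC₁, rfl⟩ := h₁
  obtain ⟨hB₂, hCs₂, hC₂, rfl⟩ := h₂
  refine ⟨hB₁.fromBlocks .zero .zero hB₂, hCs₁.fromBlocks transpose_zero hCs₂,
    hC₁.fromBlocks .zero .zero hC₂, ?_⟩
  simp only [fromBlocks_transpose, fromBlocks_multiply, transpose_zero, Matrix.mul_zero,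
    Matrix.zero_mul, add_zero, zero_add]

variable [Fintype V] [Fintype W]

lemma stM_fromBlocks_le {A₁ : Matrix V V ℝ} {A₂ : Matrix W W ℝ} (hs₁ : A₁.IsSymm)
    (hn₁ : EntrywiseNonneg A₁) (hs₂ : A₂.IsSymm) (hn₂ : EntrywiseNonneg A₂) :
    stM (fromBlocks A₁ 0 0 A₂) ≤ stM A₁ + stM A₂ := by
  obtain ⟨B₁, C₁, h₁⟩ := exists_isSNTrifactorization_stM hs₁ hn₁
  obtain ⟨B₂, C₂, h₂⟩ := exists_isSNTrifactorization_stM hs₂ hn₂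
  simpa using (h₁.fromBlocks h₂).stM_le

lemma stM_submatrix_inl_add_stM_submatrix_inr_le {A : Matrix (V ⊕ W) (V ⊕ W) ℝ}
    (hs : A.IsSymm) (hn : EntrywiseNonneg A) (hA : ∀ v w, A (.inl v) (.inr w) = 0) :
    stM (A.submatrix .inl .inl) + stM (A.submatrix .inr .inr) ≤ stM A := by
  classical
  obtain ⟨B, C, h⟩ := exists_isSNTrifactorization_stM hs hn
  have ⟨hB, hCs, hC, hBCB⟩ := h
  let S := Finset.univ.filter fun p => ∃ v, B (.inl v) p ≠ 0
  let T := Finset.univ.filter fun p => ∃ w, B (.inr w) p ≠ 0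
  have hS : ∀ v p, p ∉ S → B (.inl v) p = 0 := fun v p hp => by
    by_contra hne
    exact hp (Finset.mem_filter.2 ⟨Finset.mem_univ p, v, hne⟩)
  have hT : ∀ w p, p ∉ T → B (.inr w) p = 0 := fun w p hp => by
    by_contra hne
    exact hp (Finset.mem_filter.2 ⟨Finset.mem_univ p, w, hne⟩)
  have hST : ∀ p q, p ∈ S → q ∈ T → C p q = 0 := fun p q hp hq => by
    obtain ⟨v, hv⟩ := (Finset.mem_filter.1 hp).2
    obtain ⟨w, hw⟩ := (Finset.mem_filter.1 hq).2
    by_contra hCpq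
    exact mul_ne_zero (mul_ne_zero hv hCpq) hw
      (mul_mul_transpose_apply_eq_zero hB hC (hBCB ▸ hA v w) p q)
  have hV : stM (A.submatrix .inl .inl) ≤ (S \ T).card := by
    refine (h.submatrix .inl (S \ T) fun u u' p q hp => ?_).stM_le.trans_eq (Fintype.card_coe _)
    by_cases hpS : p ∈ S
    · have hpT : p ∈ T := not_not.1 fun hpT => hp (Finset.mem_sdiff.2 ⟨hpS, hpT⟩)
      by_cases hqS : q ∈ S
      · rw [← hCs.apply, hST q p hqS hpT, mul_zero, zero_mul]
      · rw [hS u' q hqS, mul_zero]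
    · rw [hS u p hpS, zero_mul, zero_mul]
  have hW : stM (A.submatrix .inr .inr) ≤ T.card :=
    (h.submatrix .inr T fun u u' p q hp => by rw [hT u p hp, zero_mul, zero_mul]).stM_le.trans_eq
      (Fintype.card_coe _)
  calc _ ≤ (S \ T).card + T.card := add_le_add hV hW
    _ = (S \ T ∪ T).card := (Finset.card_union_of_disjoint Finset.sdiff_disjoint).symm
    _ ≤ stM A := (Finset.card_le_univ _).trans_eq (Fintype.card_fin _)

end Blocks

section Graphs

variable {V W : Type*} [Fintype V] [Fintype W]

lemma stMGraph_le_stM (G : LGraph V) {A : Matrix V V ℝ} (hs : A.IsSymm)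
    (hn : EntrywiseNonneg A) (hp : ∀ i j, G.Adj i j ↔ 0 < A i j) : stMGraph G ≤ stM A :=
  Nat.sInf_le ⟨A, hs, hn, hp, rfl⟩

lemma exists_stM_eq_stMGraph (G : LGraph V) :
    ∃ A : Matrix V V ℝ, A.IsSymm ∧ EntrywiseNonneg A ∧ (∀ i j, G.Adj i j ↔ 0 < A i j) ∧
      stM A = stMGraph G := by
  classical
  let A : Matrix V V ℝ := of fun i j => if G.Adj i j then 1 else 0
  have hs : A.IsSymm := by
    ext i j
    exact if_congr ⟨G.symm, G.symm⟩ rfl rfl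
  have hn : EntrywiseNonneg A := fun i j => by
    simp only [A, of_apply]
    split_ifs <;> norm_num
  have hp : ∀ i j, G.Adj i j ↔ 0 < A i j := fun i j => by
    by_cases h : G.Adj i j <;> simp [A, h]
  have hne : {k | ∃ A : Matrix V V ℝ, A.IsSymm ∧ EntrywiseNonneg A ∧
      (∀ i j, G.Adj i j ↔ 0 < A i j) ∧ stM A = k}.Nonempty := ⟨_, A, hs, hn, hp, rfl⟩
  exact Nat.sInf_mem hne

lemma stMGraph_disjUnion_le (G : LGraph V) (H : LGraph W) :
    stMGraph (disjUnion G H) ≤ stMGraph G + stMGraph H := by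
  obtain ⟨A₁, hs₁, hn₁, hp₁, hst₁⟩ := exists_stM_eq_stMGraph G
  obtain ⟨A₂, hs₂, hn₂, hp₂, hst₂⟩ := exists_stM_eq_stMGraph H
  have hp : ∀ x y, (disjUnion G H).Adj x y ↔ 0 < fromBlocks A₁ 0 0 A₂ x y
    | .inl i, .inl j => hp₁ i j
    | .inl _, .inr _ | .inr _, .inl _ => iff_of_false id (lt_irrefl 0)
    | .inr i, .inr j => hp₂ i j
  calc stMGraph (disjUnion G H)
      ≤ stM (fromBlocks A₁ 0 0 A₂) :=
        stMGraph_le_stM _ (hs₁.fromBlocks transpose_zero hs₂) (hn₁.fromBlocks .zero .zero hn₂) hp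
    _ ≤ stM A₁ + stM A₂ := stM_fromBlocks_le hs₁ hn₁ hs₂ hn₂
    _ = stMGraph G + stMGraph H := by rw [hst₁, hst₂]

lemma le_stMGraph_disjUnion (G : LGraph V) (H : LGraph W) :
    stMGraph G + stMGraph H ≤ stMGraph (disjUnion G H) := by
  obtain ⟨A, hs, hn, hp, hst⟩ := exists_stM_eq_stMGraph (disjUnion G H)
  have hA : ∀ v w, A (.inl v) (.inr w) = 0 := fun v w =>
    le_antisymm (not_lt.1 fun hpos => (hp (.inl v) (.inr w)).2 hpos) (hn _ _)
  calc stMGraph G + stMGraph H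
      ≤ stM (A.submatrix .inl .inl) + stM (A.submatrix .inr .inr) :=
        add_le_add
          (stMGraph_le_stM G (hs.submatrix _) (fun _ _ => hn _ _) fun i j => hp (.inl i) (.inl j))
          (stMGraph_le_stM H (hs.submatrix _) (fun _ _ => hn _ _) fun i j => hp (.inr i) (.inr j))
    _ ≤ stM A := stM_submatrix_inl_add_stM_submatrix_inr_le hs hn hA
    _ = stMGraph (disjUnion G H) := hst

lemma stMGraph_emptyGraph : stMGraph (emptyGraph V) = 0 := by
  have h0 : IsSNTrifactorization (0 : Matrix V V ℝ) (0 : Matrix V (Fin 0) ℝ) 0 :=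
    ⟨.zero, transpose_zero, .zero, by rw [Matrix.mul_zero, Matrix.zero_mul]⟩
  refine Nat.le_zero.1 ((stMGraph_le_stM _ transpose_zero .zero fun _ _ => ?_).trans h0.stM_le)
  exact iff_of_false id (lt_irrefl 0)

lemma stMGraph_disjUnion_eq_add (G : LGraph V) (H : LGraph W) :
    stMGraph (disjUnion G H) = stMGraph G + stMGraph H :=
  (stMGraph_disjUnion_le G H).antisymm (le_stMGraph_disjUnion G H)

end Graphs

/-- For any graphs `G` and `H` (simple, allowing loops),
`st₊(G ∪ H) = st₊(G) + st₊(H)`; in particular `st₊(G ∪ K₁) = st₊(G)` where `K₁`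
is a single vertex with no loop. Here `st₊` of a graph is defined via SN-Trifactorizations
of symmetric nonnegative matrices with the given pattern graph. -/
theorem stMGraph_disjUnion {V W : Type*} [Fintype V] [Fintype W]
    (G : LGraph V) (H : LGraph W) :
    stMGraph (disjUnion G H) = stMGraph G + stMGraph H ∧
    stMGraph (disjUnion G (emptyGraph (Fin 1))) = stMGraph G := by
  refine ⟨stMGraph_disjUnion_eq_add G H, ?_⟩
  rw [stMGraph_disjUnion_eq_add, stMGraph_emptyGraph, add_zero]

end LGraph
end

section
/- For every simple graph G that allows loops, st_+(G) equals the minimum of |𝒞| over all set-join covers 𝒞 of G. That is, the SNT-rank of G equals the minimal order of a set-join cover of G. -/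
/-!
For nonnegative `B` and `C`, the entry `(B * C * Bᵀ) u v` is positive exactly when there are
indices `p`, `q` with `B u p`, `C p q`, `B v q` all positive. Hence a trifactorization of inner
size `k` of a matrix with pattern `G` yields a set-join cover of `G` whose components are among
the `k` column supports of `B`, joined whenever the corresponding entry of `C` is positive.
Conversely, a set-join cover `𝒞` yields the trifactorization `B * C * Bᵀ` with `B` the incidence
matrix between vertices and components and `C` the adjacency matrix of the cover graph `G(𝒞)`.
-/

open Matrix

namespace LGraph

variable {V W : Type*}

section Trifactorization

variable {m n o ι κ : Type*}

lemma EntrywiseNonneg.transpose {M : Matrix m n ℝ} (hM : EntrywiseNonneg M) :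
    EntrywiseNonneg Mᵀ :=
  fun i j => hM j i

lemma EntrywiseNonneg.mul [Fintype n] {M : Matrix m n ℝ} {N : Matrix n o ℝ}
    (hM : EntrywiseNonneg M) (hN : EntrywiseNonneg N) : EntrywiseNonneg (M * N) :=
  fun i k => Finset.sum_nonneg fun j _ => mul_nonneg (hM i j) (hN j k)

lemma EntrywiseNonneg.mul_apply_pos_iff [Fintype n] {M : Matrix m n ℝ} {N : Matrix n o ℝ}
    (hM : EntrywiseNonneg M) (hN : EntrywiseNonneg N) (i : m) (k : o) :
    0 < (M * N) i k ↔ ∃ j, 0 < M i j ∧ 0 < N j k := by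
  rw [mul_apply, Finset.sum_pos_iff_of_nonneg fun j _ => mul_nonneg (hM i j) (hN j k)]
  refine exists_congr fun j => ?_
  rw [(mul_nonneg (hM i j) (hN j k)).lt_iff_ne', mul_ne_zero_iff, (hM i j).lt_iff_ne',
    (hN j k).lt_iff_ne', and_iff_right (Finset.mem_univ j)]

def IsSNTFactorization [Fintype ι] (A : Matrix m m ℝ) (B : Matrix m ι ℝ) (C : Matrix ι ι ℝ) :
    Prop :=
  EntrywiseNonneg B ∧ C.IsSymm ∧ EntrywiseNonneg C ∧ A = B * C * Bᵀ

namespace IsSNTFactorization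

variable [Fintype ι] {A : Matrix m m ℝ} {B : Matrix m ι ℝ} {C : Matrix ι ι ℝ}

lemma isSymm (h : IsSNTFactorization A B C) : A.IsSymm := by
  obtain ⟨-, hC, -, rfl⟩ := h
  rw [IsSymm, transpose_mul, transpose_mul, transpose_transpose, hC.eq, Matrix.mul_assoc]

lemma nonneg (h : IsSNTFactorization A B C) : EntrywiseNonneg A := by
  obtain ⟨hB, -, hC, rfl⟩ := h
  exact (hB.mul hC).mul hB.transpose

lemma apply_pos_iff (h : IsSNTFactorization A B C) (u v : m) :
    0 < A u v ↔ ∃ p q, 0 < B u p ∧ 0 < C p q ∧ 0 < B v q := by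
  obtain ⟨hB, -, hC, rfl⟩ := h
  simp only [(hB.mul hC).mul_apply_pos_iff hB.transpose, hB.mul_apply_pos_iff hC,
    transpose_apply]
  constructor
  · rintro ⟨q, ⟨p, hup, hpq⟩, hvq⟩
    exact ⟨p, q, hup, hpq, hvq⟩
  · rintro ⟨p, q, hup, hpq, hvq⟩
    exact ⟨q, ⟨p, hup, hpq⟩, hvq⟩

lemma reindex [Fintype κ] (h : IsSNTFactorization A B C) (e : ι ≃ κ) :
    IsSNTFactorization A (B.submatrix id e.symm) (C.submatrix e.symm e.symm) := by
  obtain ⟨hB, hCs, hC, rfl⟩ := h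
  refine ⟨fun i p => hB _ _, hCs.submatrix _, fun p q => hC _ _, ?_⟩
  rw [submatrix_mul_equiv, transpose_submatrix, submatrix_mul_equiv, submatrix_id_id]

lemma stM_le [Fintype m] (h : IsSNTFactorization A B C) : stM A ≤ Fintype.card ι := by
  unfold stM
  exact Nat.sInf_le ⟨_, _, h.reindex (Fintype.equivFin ι)⟩

end IsSNTFactorization

lemma exists_sntFactorization_stM [Fintype m] {A : Matrix m m ℝ} (hA : A.IsSymm)
    (hA₀ : EntrywiseNonneg A) :
    ∃ (B : Matrix m (Fin (stM A)) ℝ) (C : Matrix (Fin (stM A)) (Fin (stM A)) ℝ),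
      IsSNTFactorization A B C := by
  classical
  have hid : IsSNTFactorization A 1 A :=
    ⟨fun i j => by rw [one_apply]; split_ifs <;> norm_num, hA, hA₀, by simp⟩
  exact Nat.sInf_mem (s := {k | ∃ (B : Matrix m (Fin k) ℝ) (C : Matrix (Fin k) (Fin k) ℝ),
    IsSNTFactorization A B C}) ⟨_, _, _, hid.reindex (Fintype.equivFin m)⟩

end Trifactorization

section FactorizationToCover

variable {ι : Type*} [Fintype ι]

def colSupport (B : Matrix V ι ℝ) (p : ι) : Set V := {v | 0 < B v p}

def joinCover (B : Matrix V ι ℝ) (C : Matrix ι ι ℝ) : Set (Sym2 (Set V)) :=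
  {z | ∃ p q, 0 < C p q ∧ (colSupport B p).Nonempty ∧ (colSupport B q).Nonempty ∧
    z = s(colSupport B p, colSupport B q)}

lemma IsSNTFactorization.isSetJoinCover {G : LGraph V} {A : Matrix V V ℝ} {B : Matrix V ι ℝ}
    {C : Matrix ι ι ℝ} (h : IsSNTFactorization A B C) (hG : ∀ u v, G.Adj u v ↔ 0 < A u v) :
    G.IsSetJoinCover (joinCover B C) := by
  refine ⟨?_, fun u v => ?_⟩
  · rintro _ ⟨p, q, -, hp, hq, rfl⟩ K hK
    rcases Sym2.mem_iff.mp hK with rfl | rfl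
    exacts [hp, hq]
  rw [hG, h.apply_pos_iff]
  constructor
  · rintro ⟨p, q, hup, hpq, hvq⟩
    exact ⟨_, ⟨p, q, hpq, ⟨u, hup⟩, ⟨v, hvq⟩, rfl⟩, _, _, rfl, hup, hvq⟩
  · rintro ⟨_, ⟨p, q, hpq, -, -, rfl⟩, K, L, hKL, huK, hvL⟩
    rcases Sym2.eq_iff.mp hKL with ⟨rfl, rfl⟩ | ⟨rfl, rfl⟩
    · exact ⟨p, q, huK, hpq, hvL⟩
    · exact ⟨q, p, huK, h.2.1.apply p q ▸ hpq, hvL⟩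

lemma coverOrder_joinCover_le (B : Matrix V ι ℝ) (C : Matrix ι ι ℝ) :
    coverOrder (joinCover B C) ≤ Fintype.card ι := by
  have hsub : comps (joinCover B C) ⊆ Set.range (colSupport B) := by
    rintro K ⟨_, ⟨p, q, -, -, -, rfl⟩, hK⟩
    rcases Sym2.mem_iff.mp hK with rfl | rfl
    exacts [⟨p, rfl⟩, ⟨q, rfl⟩]
  calc coverOrder (joinCover B C) ≤ (Set.range (colSupport B)).ncard :=
        Set.ncard_le_ncard hsub (Set.finite_range _)
    _ = Nat.card (Set.range (colSupport B)) := (Nat.card_coe_set_eq _).symm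
    _ ≤ Nat.card ι := Finite.card_range_le _
    _ = Fintype.card ι := Nat.card_eq_fintype_card

lemma exists_cover_coverOrder_le_stM [Fintype V] {G : LGraph V} {A : Matrix V V ℝ}
    (hA : A.IsSymm) (hA₀ : EntrywiseNonneg A) (hG : ∀ u v, G.Adj u v ↔ 0 < A u v) :
    ∃ 𝒞, G.IsSetJoinCover 𝒞 ∧ coverOrder 𝒞 ≤ stM A := by
  obtain ⟨B, C, h⟩ := exists_sntFactorization_stM hA hA₀
  exact ⟨_, h.isSetJoinCover hG, (coverOrder_joinCover_le B C).trans_eq (Fintype.card_fin _)⟩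

end FactorizationToCover

section CoverToFactorization

open Classical in
noncomputable def incidenceMatrix (𝒞 : Set (Sym2 (Set V))) : Matrix V (comps 𝒞) ℝ :=
  fun v K => if v ∈ (K : Set V) then 1 else 0

open Classical in
noncomputable def coverAdjMatrix (𝒞 : Set (Sym2 (Set V))) : Matrix (comps 𝒞) (comps 𝒞) ℝ :=
  fun K L => if (coverGraph 𝒞).Adj K L then 1 else 0

lemma ite_one_zero_pos_iff {R : Type*} [Zero R] [One R] [PartialOrder R] [ZeroLEOneClass R]
    [NeZero (1 : R)] {P : Prop} [Decidable P] : (0 : R) < (if P then 1 else 0) ↔ P := by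
  split_ifs <;> simp [*]

lemma isSNTFactorization_incidenceMatrix (𝒞 : Set (Sym2 (Set V))) [Fintype (comps 𝒞)] :
    IsSNTFactorization
      (incidenceMatrix 𝒞 * coverAdjMatrix 𝒞 * (incidenceMatrix 𝒞)ᵀ)
      (incidenceMatrix 𝒞) (coverAdjMatrix 𝒞) := by
  refine ⟨fun v K => ?_, IsSymm.ext fun K L => ?_, fun K L => ?_, rfl⟩
  · unfold incidenceMatrix; split_ifs <;> norm_num
  · classical
    exact if_congr ⟨(coverGraph 𝒞).symm, (coverGraph 𝒞).symm⟩ rfl rfl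
  · unfold coverAdjMatrix; split_ifs <;> norm_num

lemma IsSetJoinCover.adj_iff {G : LGraph V} {𝒞 : Set (Sym2 (Set V))} (h : G.IsSetJoinCover 𝒞)
    (u v : V) : G.Adj u v ↔ ∃ K L : comps 𝒞, u ∈ (K : Set V) ∧ (coverGraph 𝒞).Adj K L ∧
      v ∈ (L : Set V) := by
  rw [h.2]
  constructor
  · rintro ⟨_, hz, K, L, rfl, huK, hvL⟩
    exact ⟨⟨K, _, hz, Sym2.mem_mk_left K L⟩, ⟨L, _, hz, Sym2.mem_mk_right K L⟩, huK, hz, hvL⟩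
  · rintro ⟨K, L, huK, hKL, hvL⟩
    exact ⟨_, hKL, K, L, rfl, huK, hvL⟩

lemma exists_matrix_stM_le_coverOrder [Fintype V] {G : LGraph V} {𝒞 : Set (Sym2 (Set V))}
    (h : G.IsSetJoinCover 𝒞) :
    ∃ A : Matrix V V ℝ, A.IsSymm ∧ EntrywiseNonneg A ∧ (∀ u v, G.Adj u v ↔ 0 < A u v) ∧
      stM A ≤ coverOrder 𝒞 := by
  have := Fintype.ofFinite (comps 𝒞)
  have hfac := isSNTFactorization_incidenceMatrix 𝒞
  refine ⟨_, hfac.isSymm, hfac.nonneg, fun u v => ?_, hfac.stM_le.trans_eq ?_⟩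
  · simp only [h.adj_iff, hfac.apply_pos_iff, incidenceMatrix, coverAdjMatrix,
      ite_one_zero_pos_iff]
  · rw [← Nat.card_eq_fintype_card, Nat.card_coe_set_eq, coverOrder]

end CoverToFactorization

/-- For every graph `G` (simple, allowing loops), the SNT-rank of `G`
(defined via SN-Trifactorizations of symmetric nonnegative matrices with pattern graph `G`)
equals the minimal order of a set-join cover of `G`. -/
theorem stMGraph_eq_min_coverOrder {V : Type*} [Fintype V] (G : LGraph V) :
    stMGraph G =
      sInf {k : ℕ | ∃ 𝒞 : Set (Sym2 (Set V)), G.IsSetJoinCover 𝒞 ∧ coverOrder 𝒞 = k} := by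
  refine csInf_eq_csInf_of_forall_exists_le ?_ ?_
  · rintro _ ⟨A, hA, hA₀, hG, rfl⟩
    obtain ⟨𝒞, h𝒞, hle⟩ := exists_cover_coverOrder_le_stM hA hA₀ hG
    exact ⟨_, ⟨𝒞, h𝒞, rfl⟩, hle⟩
  · rintro _ ⟨𝒞, h𝒞, rfl⟩
    obtain ⟨A, hA, hA₀, hG, hle⟩ := exists_matrix_stM_le_coverOrder h𝒞
    exact ⟨_, ⟨A, hA, hA₀, hG, rfl⟩, hle⟩

end LGraph
end

section
/- Let 𝒞 be a set-join cover of a graph G with vertex set [n]. Suppose there exist a subset V' ⊆ V(𝒞) with |V'| = t and a family V = {L_1, …, L_s} of subsets of [n] with s < t, such that every element of V' can be written as a union of some elements of V. Then 𝒞 is not an optimal set-join cover of G, i.e., there is a set-join cover of G of order strictly smaller than |𝒞|. -/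
open Matrix

namespace LGraph

variable {V W : Type*}

/-!
Cover every component `K` of `𝒞` by those members of a family `𝓑` of nonempty sets that lie
inside `K`, and replace each join `K ∨ L` by all joins `A ∨ B` with `A ⊆ K`, `B ⊆ L`
taken from `𝓑`. This covers exactly the same edges, and its components all lie in `𝓑`.
Taking for `𝓑` the untouched components `V(𝒞) \ V'` together with the nonempty `Lᵢ`
gives order at most `|𝒞| - t + s < |𝒞|`.
-/

def refineCover (𝒞 : Set (Sym2 (Set V))) (𝓑 : Set (Set V)) : Set (Sym2 (Set V)) :=
  {q | ∃ K L, s(K, L) ∈ 𝒞 ∧ ∃ A ∈ 𝓑, ∃ B ∈ 𝓑, A ⊆ K ∧ B ⊆ L ∧ q = s(A, B)}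

theorem comps_refineCover_subset (𝒞 : Set (Sym2 (Set V))) (𝓑 : Set (Set V)) :
    comps (refineCover 𝒞 𝓑) ⊆ 𝓑 := by
  rintro C ⟨_, ⟨K, L, -, A, hA, B, hB, -, -, rfl⟩, hC⟩
  rcases Sym2.mem_iff.mp hC with rfl | rfl
  exacts [hA, hB]

theorem mem_comps_of_mk_mem {𝒞 : Set (Sym2 (Set V))} {K L : Set V} (h : s(K, L) ∈ 𝒞) :
    K ∈ comps 𝒞 :=
  ⟨_, h, Sym2.mem_mk_left K L⟩

theorem IsSetJoinCover.refineCover {G : LGraph V} {𝒞 : Set (Sym2 (Set V))}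
    {𝓑 : Set (Set V)} (hcov : G.IsSetJoinCover 𝒞) (hne : ∀ A ∈ 𝓑, A.Nonempty)
    (hgen : ∀ K ∈ comps 𝒞, ∀ u ∈ K, ∃ A ∈ 𝓑, A ⊆ K ∧ u ∈ A) :
    G.IsSetJoinCover (refineCover 𝒞 𝓑) := by
  refine ⟨fun q hq C hC => hne C (comps_refineCover_subset 𝒞 𝓑 ⟨q, hq, hC⟩), fun u v => ?_⟩
  rw [hcov.2 u v]
  constructor
  · rintro ⟨p, hp, K, L, rfl, huK, hvL⟩
    obtain ⟨A, hA, hAK, huA⟩ := hgen K (mem_comps_of_mk_mem hp) u huK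
    obtain ⟨B, hB, hBL, hvB⟩ := hgen L (mem_comps_of_mk_mem (Sym2.eq_swap ▸ hp)) v hvL
    exact ⟨s(A, B), ⟨K, L, hp, A, hA, B, hB, hAK, hBL, rfl⟩, A, B, rfl, huA, hvB⟩
  · rintro ⟨_, ⟨K, L, hp, A, -, B, -, hAK, hBL, rfl⟩, A', B', hq, huA', hvB'⟩
    rcases Sym2.eq_iff.mp hq with ⟨rfl, rfl⟩ | ⟨rfl, rfl⟩
    · exact ⟨_, hp, K, L, rfl, hAK huA', hBL hvB'⟩
    · exact ⟨_, hp, L, K, Sym2.eq_swap, hBL huA', hAK hvB'⟩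

theorem _root_.Set.ncard_sdiff_union_lt {α : Type*} [Finite α] {S T U : Set α}
    (hTS : T ⊆ S) (hUT : U.ncard < T.ncard) : (S \ T ∪ U).ncard < S.ncard :=
  calc (S \ T ∪ U).ncard ≤ (S \ T).ncard + U.ncard := Set.ncard_union_le _ _
    _ < (S \ T).ncard + T.ncard := by omega
    _ = S.ncard := Set.ncard_sdiff_add_ncard_of_subset hTS

/-- Let `𝒞` be a set-join cover of a graph `G` on vertex set `Fin n`.
If there exist `V' ⊆ V(𝒞)` with `|V'| = t` and a family `L₁, …, L_s` of subsets of the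
vertex set with `s < t` such that every element of `V'` is a union of some of the `Lᵢ`,
then `𝒞` is not optimal: there is a set-join cover of `G` of strictly smaller order. -/
theorem not_optimal_of_union_representation {n : ℕ} (G : LGraph (Fin n))
    (𝒞 : Set (Sym2 (Set (Fin n)))) (hcov : G.IsSetJoinCover 𝒞)
    (t s : ℕ) (V' : Set (Set (Fin n))) (hsub : V' ⊆ comps 𝒞)
    (hcard : V'.ncard = t) (hst : s < t) (L : Fin s → Set (Fin n))
    (hunion : ∀ K ∈ V', ∃ I : Set (Fin s), K = ⋃ i ∈ I, L i) :
    ∃ 𝒟 : Set (Sym2 (Set (Fin n))), G.IsSetJoinCover 𝒟 ∧ coverOrder 𝒟 < coverOrder 𝒞 := by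
  set 𝓑 := comps 𝒞 \ V' ∪ {A ∈ Set.range L | A.Nonempty}
  have hne : ∀ A ∈ 𝓑, A.Nonempty := by
    rintro A (⟨⟨p, hp, hA⟩, -⟩ | ⟨-, hA⟩)
    exacts [hcov.1 p hp A hA, hA]
  have hgen : ∀ K ∈ comps 𝒞, ∀ u ∈ K, ∃ A ∈ 𝓑, A ⊆ K ∧ u ∈ A := by
    intro K hK u hu
    by_cases hKV : K ∈ V'
    · obtain ⟨I, rfl⟩ := hunion K hKV
      obtain ⟨i, hi, hui⟩ := Set.mem_iUnion₂.mp hu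
      exact ⟨L i, Or.inr ⟨⟨i, rfl⟩, u, hui⟩, Set.subset_biUnion_of_mem hi, hui⟩
    · exact ⟨K, Or.inl ⟨hK, hKV⟩, subset_rfl, hu⟩
  have hrange : (Set.range L).ncard ≤ s := by
    rw [← Nat.card_coe_set_eq]
    exact (Finite.card_range_le L).trans_eq (Nat.card_fin s)
  have hcard𝓑 : 𝓑.ncard < coverOrder 𝒞 :=
    Set.ncard_sdiff_union_lt hsub <| hcard ▸
      ((Set.ncard_le_ncard (Set.sep_subset _ _)).trans hrange).trans_lt hst
  exact ⟨refineCover 𝒞 𝓑, hcov.refineCover hne hgen,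
    (Set.ncard_le_ncard (comps_refineCover_subset 𝒞 𝓑)).trans_lt hcard𝓑⟩

end LGraph
end

section
/- For every graph G, st_+(G) = st_+(F_tw(G)), where F_tw(G) is the largest twin-free subgraph of G (obtained by removing all but one vertex from every set of mutually twin vertices). Moreover, G has a unique optimal set-join cover if and only if F_tw(G) has a unique optimal set-join cover. -/
open Matrix

namespace LGraph

variable {V W : Type*}

/-! Let `f : V → W` be surjective with `G.Adj u v ↔ H.Adj (f u) (f v)`, e.g. the map sending
each vertex to the representative of its twin class. Pulling a set-join cover of `H` back along
`f`, and pushing a cover of `G` forward by taking images of its components, both produce covers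
without increasing the order; hence `st₊(G) = st₊(H)`, and optimal covers go to optimal covers
in both directions. Pulling back is injective, so uniqueness passes from `G` to `H`.

Conversely, let `H` have a unique optimal cover and let `𝒞` be optimal for `G`. If some
component `K` of `𝒞` contained `u` but not its twin `v`, then deleting `f v` from the component
`f '' K` of the image cover would give a second optimal cover of `H`: the edges at `f v` remain
covered through the components containing `v`. So the components of `𝒞` are unions of twin
classes, which makes `𝒞` the pullback of the unique optimal cover of `H`. -/

section SetJoinCovers

open Function Set

variable {V W : Type*}

lemma adj_comm (G : LGraph V) {u v : V} : G.Adj u v ↔ G.Adj v u :=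
  ⟨G.symm, G.symm⟩

lemma IsSetJoinCover.adj {G : LGraph V} {𝒞 : Set (Sym2 (Set V))} (h : G.IsSetJoinCover 𝒞)
    {K L : Set V} (hKL : s(K, L) ∈ 𝒞) {u v : V} (hu : u ∈ K) (hv : v ∈ L) : G.Adj u v :=
  (h.2 u v).mpr ⟨_, hKL, K, L, rfl, hu, hv⟩

lemma IsSetJoinCover.exists_of_adj {G : LGraph V} {𝒞 : Set (Sym2 (Set V))}
    (h : G.IsSetJoinCover 𝒞) {u v : V} (huv : G.Adj u v) :
    ∃ K L, s(K, L) ∈ 𝒞 ∧ u ∈ K ∧ v ∈ L := by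
  obtain ⟨_, hp, K, L, rfl, hu, hv⟩ := (h.2 u v).mp huv
  exact ⟨K, L, hp, hu, hv⟩

def mapComps (g : Set V → Set W) (𝒞 : Set (Sym2 (Set V))) : Set (Sym2 (Set W)) :=
  {q ∈ Sym2.map g '' 𝒞 | ∀ A ∈ q, A.Nonempty}

lemma comps_mapComps_subset (g : Set V → Set W) (𝒞 : Set (Sym2 (Set V))) :
    comps (mapComps g 𝒞) ⊆ g '' comps 𝒞 := by
  rintro A ⟨_, ⟨⟨p, hp, rfl⟩, -⟩, hA⟩
  obtain ⟨K, hK, rfl⟩ := Sym2.mem_map.mp hA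
  exact ⟨K, ⟨p, hp, hK⟩, rfl⟩

lemma coverOrder_mapComps_le [Finite V] (g : Set V → Set W) (𝒞 : Set (Sym2 (Set V))) :
    coverOrder (mapComps g 𝒞) ≤ coverOrder 𝒞 :=
  (ncard_le_ncard (comps_mapComps_subset g 𝒞)).trans ncard_image_le

lemma mapComps_eq_image {g : Set V → Set W} {𝒞 : Set (Sym2 (Set V))}
    (hg : ∀ p ∈ 𝒞, ∀ K ∈ p, (g K).Nonempty) : mapComps g 𝒞 = Sym2.map g '' 𝒞 := by
  refine sep_eq_self_iff_mem_true.mpr ?_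
  rintro _ ⟨p, hp, rfl⟩ A hA
  obtain ⟨K, hK, rfl⟩ := Sym2.mem_map.mp hA
  exact hg p hp K hK

lemma isSetJoinCover_mapComps {H : LGraph W} {g : Set V → Set W} {𝒞 : Set (Sym2 (Set V))}
    (hsound : ∀ K L, s(K, L) ∈ 𝒞 → ∀ a ∈ g K, ∀ b ∈ g L, H.Adj a b)
    (hcomplete : ∀ a b, H.Adj a b → ∃ K L, s(K, L) ∈ 𝒞 ∧ a ∈ g K ∧ b ∈ g L) :
    H.IsSetJoinCover (mapComps g 𝒞) := by
  refine ⟨fun q hq => hq.2, fun a b => ⟨fun hab => ?_, ?_⟩⟩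
  · obtain ⟨K, L, hKL, ha, hb⟩ := hcomplete a b hab
    refine ⟨s(g K, g L), ⟨⟨_, hKL, Sym2.map_mk g K L⟩, ?_⟩, g K, g L, rfl, ha, hb⟩
    rintro A hA
    rcases Sym2.mem_iff.mp hA with rfl | rfl
    exacts [⟨a, ha⟩, ⟨b, hb⟩]
  · rintro ⟨_, ⟨⟨p, hp, rfl⟩, -⟩, A, B, hAB, ha, hb⟩
    induction p using Sym2.ind with
    | _ K L =>
      rw [Sym2.map_mk] at hAB
      rcases Sym2.eq_iff.mp hAB with ⟨rfl, rfl⟩ | ⟨rfl, rfl⟩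
      · exact hsound K L hp a ha b hb
      · exact H.symm (hsound K L hp b hb a ha)

lemma exists_isSetJoinCover (G : LGraph V) : ∃ 𝒞, G.IsSetJoinCover 𝒞 := by
  refine ⟨mapComps id {p | ∃ u v, G.Adj u v ∧ p = s({u}, {v})},
    isSetJoinCover_mapComps ?_ fun a b hab => ⟨{a}, {b}, ⟨a, b, hab, rfl⟩, rfl, rfl⟩⟩
  rintro K L ⟨u, v, huv, hp⟩ a ha b hb
  rcases Sym2.eq_iff.mp hp with ⟨rfl, rfl⟩ | ⟨rfl, rfl⟩
  · obtain rfl : a = u := ha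
    obtain rfl : b = v := hb
    exact huv
  · obtain rfl : a = v := ha
    obtain rfl : b = u := hb
    exact G.symm huv

lemma st_le_coverOrder {G : LGraph V} {𝒞 : Set (Sym2 (Set V))} (h : G.IsSetJoinCover 𝒞) :
    G.st ≤ coverOrder 𝒞 :=
  Nat.sInf_le ⟨𝒞, h, rfl⟩

lemma exists_isOptimalCover (G : LGraph V) : ∃ 𝒞, G.IsOptimalCover 𝒞 := by
  obtain ⟨𝒞, h⟩ := exists_isSetJoinCover G
  exact Nat.sInf_mem (s := {k | ∃ 𝒞, G.IsSetJoinCover 𝒞 ∧ coverOrder 𝒞 = k}) ⟨_, 𝒞, h, rfl⟩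

lemma isOptimalCover_of_coverOrder_le {G : LGraph V} {𝒞 : Set (Sym2 (Set V))}
    (h : G.IsSetJoinCover 𝒞) (hle : coverOrder 𝒞 ≤ G.st) : G.IsOptimalCover 𝒞 :=
  ⟨h, le_antisymm hle (st_le_coverOrder h)⟩

variable {G : LGraph V} {H : LGraph W} {f : V → W}

lemma isSetJoinCover_pullback (hadj : ∀ u v, G.Adj u v ↔ H.Adj (f u) (f v))
    {𝒟 : Set (Sym2 (Set W))} (h𝒟 : H.IsSetJoinCover 𝒟) :
    G.IsSetJoinCover (mapComps (f ⁻¹' ·) 𝒟) :=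
  isSetJoinCover_mapComps (fun _ _ hDE u hu v hv => (hadj u v).mpr (h𝒟.adj hDE hu hv))
    fun u v huv => h𝒟.exists_of_adj ((hadj u v).mp huv)

lemma isSetJoinCover_mapComps_of_subset_image (hadj : ∀ u v, G.Adj u v ↔ H.Adj (f u) (f v))
    {𝒞 : Set (Sym2 (Set V))} (h𝒞 : G.IsSetJoinCover 𝒞) {g : Set V → Set W}
    (hg : ∀ K, g K ⊆ f '' K) (σ : W → V) (hσ : ∀ a, f (σ a) = a)
    (hσg : ∀ K a, σ a ∈ K → a ∈ g K) : H.IsSetJoinCover (mapComps g 𝒞) := by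
  refine isSetJoinCover_mapComps (fun K L hKL a ha b hb => ?_) fun a b hab => ?_
  · obtain ⟨u, hu, rfl⟩ := hg K ha
    obtain ⟨v, hv, rfl⟩ := hg L hb
    exact (hadj u v).mp (h𝒞.adj hKL hu hv)
  · rw [← hσ a, ← hσ b, ← hadj] at hab
    obtain ⟨K, L, hKL, ha, hb⟩ := h𝒞.exists_of_adj hab
    exact ⟨K, L, hKL, hσg K a ha, hσg L b hb⟩

lemma isSetJoinCover_image (hf : Surjective f) (hadj : ∀ u v, G.Adj u v ↔ H.Adj (f u) (f v))
    {𝒞 : Set (Sym2 (Set V))} (h𝒞 : G.IsSetJoinCover 𝒞) :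
    H.IsSetJoinCover (mapComps (f '' ·) 𝒞) :=
  isSetJoinCover_mapComps_of_subset_image hadj h𝒞 (fun _ => subset_rfl) (surjInv hf)
    (surjInv_eq hf) fun _ a ha => ⟨_, ha, surjInv_eq hf a⟩

lemma IsSetJoinCover.mapComps_image_eq {𝒞 : Set (Sym2 (Set V))} (h : G.IsSetJoinCover 𝒞) :
    mapComps (f '' ·) 𝒞 = Sym2.map (f '' ·) '' 𝒞 :=
  mapComps_eq_image fun p hp K hK => (h.1 p hp K hK).image f

lemma IsSetJoinCover.mapComps_preimage_eq (hf : Surjective f) {𝒟 : Set (Sym2 (Set W))}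
    (h : H.IsSetJoinCover 𝒟) : mapComps (f ⁻¹' ·) 𝒟 = Sym2.map (f ⁻¹' ·) '' 𝒟 :=
  mapComps_eq_image fun p hp D hD => (h.1 p hp D hD).preimage hf

lemma injOn_mapComps_preimage (hf : Surjective f) :
    InjOn (mapComps (f ⁻¹' ·)) {𝒟 : Set (Sym2 (Set W)) | H.IsSetJoinCover 𝒟} := by
  intro 𝒟₁ h₁ 𝒟₂ h₂ heq
  rw [IsSetJoinCover.mapComps_preimage_eq hf h₁, IsSetJoinCover.mapComps_preimage_eq hf h₂] at heq
  exact image_injective.mpr (Sym2.map.injective hf.preimage_injective) heq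

lemma isSetJoinCover_mapComps_update_sdiff [DecidableEq (Set V)] (hf : Surjective f)
    (hadj : ∀ u v, G.Adj u v ↔ H.Adj (f u) (f v)) {𝒞 : Set (Sym2 (Set V))}
    (h𝒞 : G.IsSetJoinCover 𝒞) {K : Set V} {v : V} (hvK : v ∉ K) :
    H.IsSetJoinCover (mapComps (update (f '' ·) K (f '' K \ {f v})) 𝒞) := by
  classical
  -- a section of `f` through `v`, so that edges at `f v` are covered through components of `v`
  let σ : W → V := update (surjInv hf) (f v) v
  have hσv : σ (f v) = v := update_self _ v (surjInv hf)
  have hσ : ∀ a, f (σ a) = a := by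
    intro a
    by_cases hav : a = f v
    · rw [hav, hσv]
    · exact (congrArg f (update_of_ne hav v (surjInv hf))).trans (surjInv_eq hf a)
  refine isSetJoinCover_mapComps_of_subset_image hadj h𝒞 (fun L => ?_) σ hσ fun L a ha => ?_
  · by_cases hLK : L = K
    · rw [hLK, update_self]
      exact sdiff_subset
    · rw [update_of_ne hLK]
  · have hfa : a ∈ f '' L := ⟨σ a, ha, hσ a⟩
    by_cases hLK : L = K
    · rw [hLK, update_self]
      refine ⟨hLK ▸ hfa, fun hav => hvK ?_⟩
      rwa [mem_singleton_iff.mp hav, hσv, hLK] at ha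
    · rwa [update_of_ne hLK]

variable [Finite V]

theorem st_eq_of_surjective (hf : Surjective f) (hadj : ∀ u v, G.Adj u v ↔ H.Adj (f u) (f v)) :
    G.st = H.st := by
  have := Finite.of_surjective f hf
  obtain ⟨𝒞, h𝒞, h𝒞st⟩ := exists_isOptimalCover G
  obtain ⟨𝒟, h𝒟, h𝒟st⟩ := exists_isOptimalCover H
  apply le_antisymm
  · calc G.st ≤ coverOrder (mapComps (f ⁻¹' ·) 𝒟) :=
          st_le_coverOrder (isSetJoinCover_pullback hadj h𝒟)
      _ ≤ H.st := h𝒟st ▸ coverOrder_mapComps_le _ 𝒟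
  · calc H.st ≤ coverOrder (mapComps (f '' ·) 𝒞) :=
          st_le_coverOrder (isSetJoinCover_image hf hadj h𝒞)
      _ ≤ G.st := h𝒞st ▸ coverOrder_mapComps_le _ 𝒞

lemma IsOptimalCover.pullback (hf : Surjective f) (hadj : ∀ u v, G.Adj u v ↔ H.Adj (f u) (f v))
    {𝒟 : Set (Sym2 (Set W))} (h : H.IsOptimalCover 𝒟) :
    G.IsOptimalCover (mapComps (f ⁻¹' ·) 𝒟) := by
  have := Finite.of_surjective f hf
  refine isOptimalCover_of_coverOrder_le (isSetJoinCover_pullback hadj h.1) ?_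
  rw [st_eq_of_surjective hf hadj, ← h.2]
  exact coverOrder_mapComps_le _ 𝒟

lemma IsOptimalCover.image (hf : Surjective f) (hadj : ∀ u v, G.Adj u v ↔ H.Adj (f u) (f v))
    {𝒞 : Set (Sym2 (Set V))} (h : G.IsOptimalCover 𝒞) :
    H.IsOptimalCover (mapComps (f '' ·) 𝒞) := by
  refine isOptimalCover_of_coverOrder_le (isSetJoinCover_image hf hadj h.1) ?_
  rw [← st_eq_of_surjective hf hadj, ← h.2]
  exact coverOrder_mapComps_le _ 𝒞

lemma IsOptimalCover.injOn_image (hf : Surjective f)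
    (hadj : ∀ u v, G.Adj u v ↔ H.Adj (f u) (f v)) {𝒞 : Set (Sym2 (Set V))}
    (h : G.IsOptimalCover 𝒞) : InjOn (f '' ·) (comps 𝒞) := by
  refine injOn_of_ncard_image_eq (le_antisymm ncard_image_le ?_)
  calc (comps 𝒞).ncard = H.st := h.2.trans (st_eq_of_surjective hf hadj)
    _ = (comps (mapComps (f '' ·) 𝒞)).ncard := ((h.image hf hadj).2).symm
    _ ≤ ((f '' ·) '' comps 𝒞).ncard := ncard_le_ncard (comps_mapComps_subset _ 𝒞)

lemma IsOptimalCover.preimage_image_eq (hf : Surjective f)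
    (hadj : ∀ u v, G.Adj u v ↔ H.Adj (f u) (f v)) (hH : HasUniqueOptimalCover H)
    {𝒞 : Set (Sym2 (Set V))} (h : G.IsOptimalCover 𝒞) {K : Set V} (hK : K ∈ comps 𝒞) :
    f ⁻¹' (f '' K) = K := by
  classical
  refine subset_antisymm (fun v hv => ?_) (subset_preimage_image f K)
  by_contra hvK
  have hshrunk : H.IsOptimalCover (mapComps (update (f '' ·) K (f '' K \ {f v})) 𝒞) := by
    refine isOptimalCover_of_coverOrder_le
      (isSetJoinCover_mapComps_update_sdiff hf hadj h.1 hvK) ?_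
    rw [← st_eq_of_surjective hf hadj, ← h.2]
    exact coverOrder_mapComps_le _ 𝒞
  have hfK : f '' K ∈ comps (mapComps (update (f '' ·) K (f '' K \ {f v})) 𝒞) := by
    rw [ExistsUnique.unique hH hshrunk (h.image hf hadj), h.1.mapComps_image_eq]
    obtain ⟨p, hp, hKp⟩ := hK
    exact ⟨_, ⟨p, hp, rfl⟩, Sym2.mem_map.mpr ⟨K, hKp, rfl⟩⟩
  obtain ⟨L, hL, hgL⟩ := comps_mapComps_subset _ 𝒞 hfK
  by_cases hLK : L = K
  · rw [hLK, update_self] at hgL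
    exact (hgL.symm ▸ hv : f v ∈ f '' K \ {f v}).2 rfl
  · rw [update_of_ne hLK] at hgL
    exact hLK (h.injOn_image hf hadj hL hK hgL)

lemma IsOptimalCover.eq_pullback_image (hf : Surjective f)
    (hadj : ∀ u v, G.Adj u v ↔ H.Adj (f u) (f v)) (hH : HasUniqueOptimalCover H)
    {𝒞 : Set (Sym2 (Set V))} (h : G.IsOptimalCover 𝒞) :
    𝒞 = mapComps (f ⁻¹' ·) (mapComps (f '' ·) 𝒞) := by
  rw [(h.image hf hadj).1.mapComps_preimage_eq hf, h.1.mapComps_image_eq, image_image]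
  refine (image_id' 𝒞).symm.trans (image_congr fun p hp => ?_)
  rw [Sym2.map_map]
  refine (congrFun Sym2.map_id' p).symm.trans (Sym2.map_congr fun K hK => ?_)
  exact (h.preimage_image_eq hf hadj hH ⟨p, hp, hK⟩).symm

theorem hasUniqueOptimalCover_iff_of_surjective (hf : Surjective f)
    (hadj : ∀ u v, G.Adj u v ↔ H.Adj (f u) (f v)) :
    HasUniqueOptimalCover G ↔ HasUniqueOptimalCover H := by
  constructor
  · rintro ⟨𝒞₀, -, h𝒞₀⟩
    obtain ⟨𝒟, h𝒟⟩ := exists_isOptimalCover H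
    refine ⟨𝒟, h𝒟, fun 𝒟' (h𝒟' : H.IsOptimalCover 𝒟') => injOn_mapComps_preimage hf h𝒟'.1 h𝒟.1 ?_⟩
    rw [h𝒞₀ _ (h𝒟'.pullback hf hadj), h𝒞₀ _ (h𝒟.pullback hf hadj)]
  · intro hH
    obtain ⟨𝒟₀, h𝒟₀⟩ := exists_isOptimalCover H
    refine ⟨_, h𝒟₀.pullback hf hadj, fun 𝒞 (h𝒞 : G.IsOptimalCover 𝒞) => ?_⟩
    rw [h𝒞.eq_pullback_image hf hadj hH, ExistsUnique.unique hH (h𝒞.image hf hadj) h𝒟₀]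

end SetJoinCovers

lemma adj_iff_adj_of_neighborSet_eq {V : Type*} {G : LGraph V} {r : V → V}
    (hr : ∀ v, G.neighborSet v = G.neighborSet (r v)) (u v : V) :
    G.Adj u v ↔ G.Adj (r u) (r v) :=
  calc G.Adj u v ↔ G.Adj (r u) v := Set.ext_iff.mp (hr u) v
    _ ↔ G.Adj v (r u) := G.adj_comm
    _ ↔ G.Adj (r v) (r u) := Set.ext_iff.mp (hr v) (r u)
    _ ↔ G.Adj (r u) (r v) := G.adj_comm

/-- For every graph `G`, `st₊(G) = st₊(F_tw(G))`, where `F_tw(G)` is the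
largest twin-free subgraph of `G` — formalized as the induced subgraph on any set `S` of
vertices containing exactly one representative from every class of mutually twin vertices.
Moreover, `G` has a unique optimal set-join cover iff `F_tw(G)` does. -/
theorem st_twinFree {V : Type*} [Fintype V] (G : LGraph V) (S : Set V)
    (hrep : ∀ v : V, ∃ w ∈ S, G.neighborSet v = G.neighborSet w)
    (hdistinct : ∀ w ∈ S, ∀ w' ∈ S, G.neighborSet w = G.neighborSet w' → w = w') :
    G.st = (G.induce S).st ∧
      (HasUniqueOptimalCover G ↔ HasUniqueOptimalCover (G.induce S)) := by
  choose r hrS hN using hrep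
  let ρ : V → S := fun v => ⟨r v, hrS v⟩
  have hρ : Function.Surjective ρ := fun w =>
    ⟨w, Subtype.ext (hdistinct _ (hrS w) _ w.2 (hN w).symm)⟩
  have hadj : ∀ u v, G.Adj u v ↔ (G.induce S).Adj (ρ u) (ρ v) :=
    adj_iff_adj_of_neighborSet_eq hN
  exact ⟨st_eq_of_surjective hρ hadj, hasUniqueOptimalCover_iff_of_surjective hρ hadj⟩

end LGraph
end

section
/- Let T be a forest (a simple graph without loops and without cycles) and let A be any symmetric entrywise-nonnegative matrix whose pattern graph is T. Then rank(A) = st_+(A) = 2·starc(T), where starc(T) is the edge star cover number of T. In particular, st_+(T) = 2·starc(T). -/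
open Matrix

/-!
Induction on leaves. Let `v` be a leaf of the forest `T` with neighbour `w`. Deleting the edges
at `w` lowers `starc` by exactly one: the star at `w` restores them, and the star that covered
`vw` covers nothing else. On the matrix side, clearing row and column `w` of `A` removes the
rank-two term `e_w aᵀ + a e_wᵀ` with `a = A w`. Since row `v` of `A` is a multiple of `e_wᵀ`,
both `e_w` and `a` lie in the column space, which therefore splits as the column space of the
cleared matrix plus `span {e_w, a}`: the rank drops by exactly two. A nonnegative factorization
of the cleared matrix extends by two columns `e_w, a` with middle block `!![0, 1; 1, 0]`. Since
`rank (B C Bᵀ)` is at most the width of `B`, this gives `rank A ≤ st₊(A) ≤ 2 starc T = rank A`.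
-/

namespace LinearMap

variable {R M N : Type*} [Ring R] [AddCommGroup M] [AddCommGroup N] [Module R M] [Module R N]

theorem range_add_eq_sup_of_le {f g : M →ₗ[R] N} {S : Submodule R N}
    (hg : range g ≤ S) (hS : S ≤ range (f + g)) : range (f + g) = range f ⊔ S := by
  refine le_antisymm ?_ (sup_le ?_ hS)
  · rintro _ ⟨x, rfl⟩
    exact Submodule.add_mem_sup (mem_range_self f x) (hg (mem_range_self g x))
  · rintro _ ⟨x, rfl⟩
    rw [show f x = (f + g) x - g x by simp]
    exact sub_mem (mem_range_self _ x) (hS (hg (mem_range_self g x)))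

end LinearMap

namespace Matrix

variable {V R : Type*} [DecidableEq V]

def zeroRowCol [Zero R] (A : Matrix V V R) (w : V) : Matrix V V R :=
  of fun i j => if i = w ∨ j = w then 0 else A i j

section Zero

variable [Zero R] {A : Matrix V V R} {w : V}

lemma zeroRowCol_apply (i j : V) :
    A.zeroRowCol w i j = if i = w ∨ j = w then 0 else A i j := rfl

lemma zeroRowCol_ne_zero_iff {i j : V} :
    A.zeroRowCol w i j ≠ 0 ↔ A i j ≠ 0 ∧ i ≠ w ∧ j ≠ w := by
  rw [zeroRowCol_apply]
  split_ifs with h <;> tauto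

lemma IsSymm.zeroRowCol (hA : A.IsSymm) : (A.zeroRowCol w).IsSymm :=
  IsSymm.ext fun i j => by simp [zeroRowCol_apply, or_comm, hA.apply i j]

end Zero

lemma zeroRowCol_add_vecMulVec_add_vecMulVec [Semiring R] {A : Matrix V V R} {w : V}
    (hA : A.IsSymm) (hw : A w w = 0) :
    A.zeroRowCol w + vecMulVec (Pi.single w 1) (A w) + vecMulVec (A w) (Pi.single w 1) = A := by
  ext i j
  by_cases hi : i = w <;> by_cases hj : j = w <;>
    simp [zeroRowCol_apply, vecMulVec_apply, hi, hj, hw, hA.apply]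

variable [Fintype V]

lemma span_single_row_le_range_mulVecLin {K : Type*} [Field K] {A : Matrix V V K} {v w : V}
    (hA : A.IsSymm) (hAvw : A v w ≠ 0) (hv : ∀ u, u ≠ w → A v u = 0) :
    Submodule.span K {Pi.single w 1, A w} ≤ LinearMap.range A.mulVecLin := by
  have hcol_v : A *ᵥ Pi.single v (A v w)⁻¹ = Pi.single w 1 := by
    ext i
    by_cases hi : i = w
    · subst hi; simp [← hA.apply i v, hAvw]
    · simp [hi, ← hA.apply i v, hv i hi]
  have hcol_w : A *ᵥ Pi.single w 1 = A w := by
    ext i; simp [hA.apply w i]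
  rw [Submodule.span_le, Set.insert_subset_iff, Set.singleton_subset_iff]
  exact ⟨⟨_, hcol_v⟩, ⟨_, hcol_w⟩⟩

lemma range_mulVecLin_eq_range_zeroRowCol_sup [CommRing R] {A : Matrix V V R} {w : V}
    (hA : A.IsSymm) (hAww : A w w = 0)
    (hS : Submodule.span R {Pi.single w 1, A w} ≤ LinearMap.range A.mulVecLin) :
    LinearMap.range A.mulVecLin =
      LinearMap.range (A.zeroRowCol w).mulVecLin ⊔ Submodule.span R {Pi.single w 1, A w} := by
  conv_lhs => rw [← zeroRowCol_add_vecMulVec_add_vecMulVec hA hAww, add_assoc, mulVecLin_add]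
  refine LinearMap.range_add_eq_sup_of_le ?_ (by rwa [← mulVecLin_add, ← add_assoc,
    zeroRowCol_add_vecMulVec_add_vecMulVec hA hAww])
  rintro _ ⟨x, rfl⟩
  simp only [mulVecLin_apply, add_mulVec, vecMulVec_mulVec, op_smul_eq_smul]
  exact add_mem (Submodule.smul_mem _ _ (Submodule.subset_span (Set.mem_insert _ _)))
    (Submodule.smul_mem _ _ (Submodule.subset_span (Set.mem_insert_of_mem _ rfl)))

theorem rank_eq_rank_zeroRowCol_add_two {K : Type*} [Field K] {A : Matrix V V K} {v w : V}
    (hA : A.IsSymm) (hvw : v ≠ w) (hAvw : A v w ≠ 0) (hAww : A w w = 0)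
    (hv : ∀ u, u ≠ w → A v u = 0) :
    A.rank = (A.zeroRowCol w).rank + 2 := by
  set e : V → K := Pi.single w 1
  set S := Submodule.span K {e, A w}
  have hcoord : ∀ a b : K, (a • e + b • A w) w = a ∧ (a • e + b • A w) v = b * A v w := by
    intro a b
    simp [e, hAww, hvw, hA.apply w v]
  have hdisj : LinearMap.range (A.zeroRowCol w).mulVecLin ⊓ S = ⊥ := by
    refine eq_bot_iff.mpr fun x ⟨⟨y, hy⟩, hxS⟩ => ?_
    obtain ⟨a, b, rfl⟩ := Submodule.mem_span_pair.mp hxS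
    have hrow_zero : ∀ u, (∀ j, A.zeroRowCol w u j = 0) → (A.zeroRowCol w *ᵥ y) u = 0 :=
      fun u hu => by simp [mulVec, dotProduct, hu]
    have hw0 := hrow_zero w fun j => by simp [zeroRowCol_apply]
    have hv0 := hrow_zero v fun j => by
      by_cases hj : j = w <;> simp [zeroRowCol_apply, hj, hvw, hv]
    rw [← mulVecLin_apply, hy, (hcoord a b).1] at hw0
    rw [← mulVecLin_apply, hy, (hcoord a b).2, mul_eq_zero_iff_right hAvw] at hv0
    simp [hw0, hv0]
  have hS_finrank : Module.finrank K S = 2 := by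
    have hind : LinearIndependent K ![e, A w] := by
      refine LinearIndependent.pair_iff.mpr fun a b hab => ?_
      have := hcoord a b
      rw [hab] at this
      exact ⟨this.1.symm, (mul_eq_zero_iff_right hAvw).mp this.2.symm⟩
    rw [show S = Submodule.span K (Set.range ![e, A w]) by rw [Matrix.range_cons_cons_empty],
      finrank_span_eq_card hind, Fintype.card_fin]
  have := Submodule.finrank_sup_add_finrank_inf_eq
    (LinearMap.range (A.zeroRowCol w).mulVecLin) S
  rwa [hdisj, finrank_bot, add_zero, hS_finrank, ← range_mulVecLin_eq_range_zeroRowCol_sup hA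
    hAww (span_single_row_le_range_mulVecLin hA hAvw hv)] at this

end Matrix

namespace SimpleGraph

variable {V : Type*} {G : SimpleGraph V}

theorem IsAcyclic.exists_adj_forall_adj_eq [Finite V] (hG : G.IsAcyclic) (hne : G ≠ ⊥) :
    ∃ v w, G.Adj v w ∧ ∀ x, G.Adj v x → x = w := by
  obtain ⟨a, b, hab⟩ := ne_bot_iff_exists_adj.mp hne
  have : Nonempty V := ⟨a⟩
  obtain ⟨u, _, p, hp, hmax⟩ := Walk.exists_isPath_forall_isPath_length_le_length G
  have hnil : ¬p.Nil := by
    intro h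
    have := hmax a b (Walk.cons hab Walk.nil) (by simp [hab.ne])
    simp [Walk.length_eq_zero_iff.mpr h] at this
  refine ⟨u, p.snd, p.adj_snd hnil, fun x hux => hG.eq_snd_of_adj_start hp hux ?_⟩
  by_contra hx
  have := hmax _ _ _ (hp.cons (h := hux.symm) hx)
  simp at this

theorem IsAcyclic.leaf_induction [Finite V] {P : SimpleGraph V → Prop} (bot : P ⊥)
    (step : ∀ G v w, G.Adj v w → (∀ x, G.Adj v x → x = w) →
      P (G.deleteIncidenceSet w) → P G)
    (hG : G.IsAcyclic) : P G := by
  induction G using WellFoundedLT.induction with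
  | _ G ih =>
  rcases eq_or_ne G ⊥ with rfl | hne
  · exact bot
  obtain ⟨v, w, hvw, hleaf⟩ := hG.exists_adj_forall_adj_eq hne
  refine step G v w hvw hleaf (ih _ ?_ (hG.anti (G.deleteIncidenceSet_le w)))
  refine lt_of_le_of_ne (G.deleteIncidenceSet_le w) fun h => ?_
  have := h ▸ hvw
  simp [deleteIncidenceSet_adj] at this

section Pattern

variable {R : Type*} [Zero R] {A : Matrix V V R}

def IsPatternOf (G : SimpleGraph V) (A : Matrix V V R) : Prop :=
  ∀ i j, G.Adj i j ↔ A i j ≠ 0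

lemma IsPatternOf.apply_eq_zero (h : G.IsPatternOf A) {i j : V} (hij : ¬G.Adj i j) :
    A i j = 0 :=
  not_not.mp ((h i j).not.mp hij)

lemma IsPatternOf.eq_zero_of_eq_bot (h : (⊥ : SimpleGraph V).IsPatternOf A) : A = 0 :=
  Matrix.ext fun _ _ => h.apply_eq_zero id

lemma IsPatternOf.deleteIncidenceSet [DecidableEq V] (h : G.IsPatternOf A) (w : V) :
    (G.deleteIncidenceSet w).IsPatternOf (A.zeroRowCol w) := fun i j => by
  rw [deleteIncidenceSet_adj, h i j, Matrix.zeroRowCol_ne_zero_iff]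

end Pattern

end SimpleGraph

namespace LGraph

open SimpleGraph

section StarCover

variable {V ι κ : Type*} {G : SimpleGraph V}

def IsStarCover (G : SimpleGraph V) (f : ι → V × Set V) : Prop :=
  (∀ i, (f i).2.Nonempty ∧ (f i).1 ∉ (f i).2) ∧
    ∀ u v : V, G.Adj u v ↔ ∃ i, (u = (f i).1 ∧ v ∈ (f i).2) ∨ (v = (f i).1 ∧ u ∈ (f i).2)

lemma starCoverNumber_eq_sInf (G : SimpleGraph V) :
    starCoverNumber G = sInf {k | ∃ f : Fin k → V × Set V, IsStarCover G f} := rfl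

lemma IsStarCover.comp_equiv {f : ι → V × Set V} (hf : IsStarCover G f) (e : κ ≃ ι) :
    IsStarCover G (f ∘ e) :=
  ⟨fun i => hf.1 (e i), fun u v => (hf.2 u v).trans e.symm.exists_congr_left⟩

lemma starCoverNumber_le_card [Fintype ι] {f : ι → V × Set V} (hf : IsStarCover G f) :
    starCoverNumber G ≤ Fintype.card ι := by
  rw [starCoverNumber_eq_sInf]
  exact Nat.sInf_le ⟨_, hf.comp_equiv (Fintype.equivFin ι).symm⟩

lemma isStarCover_neighborSet (G : SimpleGraph V) :
    IsStarCover G fun x : {x // ∃ y, G.Adj x y} => ((x : V), G.neighborSet x) := by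
  refine ⟨fun x => ⟨x.2, G.irrefl⟩, fun u v => ⟨fun h => ⟨⟨u, v, h⟩, .inl ⟨rfl, h⟩⟩, ?_⟩⟩
  rintro ⟨x, ⟨rfl, h⟩ | ⟨rfl, h⟩⟩
  exacts [h, h.symm]

lemma exists_isStarCover_fin [Finite V] (G : SimpleGraph V) :
    ∃ f : Fin (starCoverNumber G) → V × Set V, IsStarCover G f := by
  have := Fintype.ofFinite V
  classical
  rw [starCoverNumber_eq_sInf]
  exact Nat.sInf_mem (s := {k | ∃ f : Fin k → V × Set V, IsStarCover G f})
    ⟨_, _, (isStarCover_neighborSet G).comp_equiv (Fintype.equivFin _).symm⟩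

lemma starCoverNumber_bot : starCoverNumber (⊥ : SimpleGraph V) = 0 :=
  Nat.eq_zero_of_le_zero <| starCoverNumber_le_card (f := (Fin.elim0 : Fin 0 → V × Set V))
    ⟨fun i => i.elim0, fun u v => by simp⟩

lemma IsStarCover.option {w v : V} {f : ι → V × Set V}
    (hf : IsStarCover (G.deleteIncidenceSet w) f) (hwv : G.Adj w v) :
    IsStarCover G fun o : Option ι => o.elim (w, G.neighborSet w) f := by
  refine ⟨fun o => o.rec ⟨⟨v, hwv⟩, G.irrefl⟩ hf.1, fun x y => ?_⟩
  simp only [Option.exists, Option.elim_none, Option.elim_some, ← hf.2,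
    deleteIncidenceSet_adj, mem_neighborSet]
  constructor
  · intro h
    by_cases hx : x = w
    · exact .inl (.inl ⟨hx, hx ▸ h⟩)
    by_cases hy : y = w
    · exact .inl (.inr ⟨hy, hy ▸ h.symm⟩)
    exact .inr ⟨h, hx, hy⟩
  · rintro ((⟨rfl, h⟩ | ⟨rfl, h⟩) | ⟨h, -⟩)
    exacts [h, h.symm, h]

lemma IsStarCover.deleteIncidenceSet {f : ι → V × Set V} (hf : IsStarCover G f) (w : V) :
    IsStarCover (G.deleteIncidenceSet w)
      fun i : {i // (f i).1 ≠ w ∧ ((f i).2 \ {w}).Nonempty} => ((f i).1, (f i).2 \ {w}) := by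
  refine ⟨fun i => ⟨i.2.2, fun h => (hf.1 i).2 h.1⟩, fun x y => ?_⟩
  rw [deleteIncidenceSet_adj, hf.2]
  constructor
  · rintro ⟨⟨i, ⟨rfl, hy⟩ | ⟨rfl, hx⟩⟩, hxw, hyw⟩
    · exact ⟨⟨i, hxw, y, hy, hyw⟩, .inl ⟨rfl, hy, hyw⟩⟩
    · exact ⟨⟨i, hyw, x, hx, hxw⟩, .inr ⟨rfl, hx, hxw⟩⟩
  · rintro ⟨⟨i, hi, _⟩, ⟨rfl, hy, hyw⟩ | ⟨rfl, hx, hxw⟩⟩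
    · exact ⟨⟨i, .inl ⟨rfl, hy⟩⟩, hi, hyw⟩
    · exact ⟨⟨i, .inr ⟨rfl, hx⟩⟩, hxw, hi⟩

theorem starCoverNumber_eq_add_one_of_leaf [Finite V] {v w : V} (hvw : G.Adj v w)
    (hleaf : ∀ x, G.Adj v x → x = w) :
    starCoverNumber G = starCoverNumber (G.deleteIncidenceSet w) + 1 := by
  classical
  refine le_antisymm ?_ ?_
  · obtain ⟨f, hf⟩ := exists_isStarCover_fin (G.deleteIncidenceSet w)
    simpa using starCoverNumber_le_card (hf.option hvw.symm)
  · obtain ⟨f, hf⟩ := exists_isStarCover_fin G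
    -- the star covering the edge `vw` is centred at `w`, or at `v` with `w` as its only leaf
    obtain ⟨i, hi⟩ := (hf.2 v w).mp hvw
    have hi_lost : ¬((f i).1 ≠ w ∧ ((f i).2 \ {w}).Nonempty) := by
      rintro ⟨hiw, x, hx, hxw⟩
      rcases hi with ⟨hv, -⟩ | ⟨hw, -⟩
      · exact hxw (hleaf x ((hf.2 v x).mpr ⟨i, .inl ⟨hv, hx⟩⟩))
      · exact hiw hw.symm
    have := starCoverNumber_le_card (hf.deleteIncidenceSet w)
    have := Fintype.card_subtype_lt
      (p := fun j => (f j).1 ≠ w ∧ ((f j).2 \ {w}).Nonempty) hi_lost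
    rw [Fintype.card_fin] at this
    omega

end StarCover

section Factorization

variable {V ι : Type*}

def HasNonnegSymmFactorization (A : Matrix V V ℝ) (k : ℕ) : Prop :=
  ∃ B : Matrix V (Fin k) ℝ, ∃ C : Matrix (Fin k) (Fin k) ℝ,
    EntrywiseNonneg B ∧ C.IsSymm ∧ EntrywiseNonneg C ∧ A = B * C * Bᵀ

lemma stM_eq_sInf [Fintype V] (A : Matrix V V ℝ) :
    stM A = sInf {k | HasNonnegSymmFactorization A k} := rfl

lemma hasNonnegSymmFactorization_card [Fintype ι] {A : Matrix V V ℝ} (B : Matrix V ι ℝ)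
    (C : Matrix ι ι ℝ) (hB : EntrywiseNonneg B) (hCs : C.IsSymm) (hCn : EntrywiseNonneg C)
    (hA : A = B * C * Bᵀ) : HasNonnegSymmFactorization A (Fintype.card ι) := by
  let e := (Fintype.equivFin ι).symm
  refine ⟨B.submatrix id e, C.submatrix e e, fun _ _ => hB _ _, hCs.submatrix e,
    fun _ _ => hCn _ _, ?_⟩
  rw [hA, transpose_submatrix, submatrix_mul_equiv, submatrix_mul_equiv, submatrix_id_id]

lemma HasNonnegSymmFactorization.add {A₁ A₂ : Matrix V V ℝ} {k l : ℕ}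
    (h₁ : HasNonnegSymmFactorization A₁ k) (h₂ : HasNonnegSymmFactorization A₂ l) :
    HasNonnegSymmFactorization (A₁ + A₂) (k + l) := by
  obtain ⟨B₁, C₁, hB₁, hC₁s, hC₁n, rfl⟩ := h₁
  obtain ⟨B₂, C₂, hB₂, hC₂s, hC₂n, rfl⟩ := h₂
  have := hasNonnegSymmFactorization_card (A := B₁ * C₁ * B₁ᵀ + B₂ * C₂ * B₂ᵀ)
    (fromCols B₁ B₂) (fromBlocks C₁ 0 0 C₂)
    (by rintro i (j | j); exacts [hB₁ i j, hB₂ i j]) (hC₁s.fromBlocks (by simp) hC₂s)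
    (by rintro (i | i) (j | j); exacts [hC₁n i j, le_rfl, le_rfl, hC₂n i j])
    (by rw [fromCols_mul_fromBlocks, transpose_fromCols, fromCols_mul_fromRows]; simp)
  rwa [Fintype.card_sum, Fintype.card_fin, Fintype.card_fin] at this

lemma hasNonnegSymmFactorization_vecMulVec_add_vecMulVec {a b : V → ℝ}
    (ha : 0 ≤ a) (hb : 0 ≤ b) :
    HasNonnegSymmFactorization (vecMulVec a b + vecMulVec b a) 2 := by
  refine ⟨of fun i => ![a i, b i], !![0, 1; 1, 0], ?_, ?_, ?_, ?_⟩
  · intro i j; fin_cases j; exacts [ha i, hb i]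
  · ext i j; fin_cases i <;> fin_cases j <;> rfl
  · intro i j; fin_cases i <;> fin_cases j <;> simp
  · ext i j; simp [vecMulVec_apply, mul_apply, Fin.sum_univ_two, add_comm]

lemma rank_le_of_hasNonnegSymmFactorization [Fintype V] {A : Matrix V V ℝ} {k : ℕ}
    (h : HasNonnegSymmFactorization A k) : A.rank ≤ k := by
  obtain ⟨B, C, -, -, -, rfl⟩ := h
  calc (B * C * Bᵀ).rank ≤ B.rank := (rank_mul_le_left _ _).trans (rank_mul_le_left _ _)
    _ ≤ k := B.rank_le_card_width.trans_eq (Fintype.card_fin k)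

lemma stM_eq_of_rank_eq [Fintype V] {A : Matrix V V ℝ} {k : ℕ}
    (h : HasNonnegSymmFactorization A k) (hk : A.rank = k) : stM A = k := by
  have hmin : HasNonnegSymmFactorization A (stM A) := by
    rw [stM_eq_sInf]
    exact Nat.sInf_mem (s := {k | HasNonnegSymmFactorization A k}) ⟨k, h⟩
  exact (Nat.sInf_le h).antisymm (hk ▸ rank_le_of_hasNonnegSymmFactorization hmin)

end Factorization

section Forest

variable {V K : Type*} {T : SimpleGraph V}

lemma EntrywiseNonneg.zeroRowCol [DecidableEq V] {A : Matrix V V ℝ} (hA : EntrywiseNonneg A)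
    (w : V) : EntrywiseNonneg (A.zeroRowCol w) := fun i j => by
  rw [zeroRowCol_apply]
  split_ifs
  exacts [le_rfl, hA i j]

lemma isPatternOf_of_pos {A : Matrix V V ℝ} (hA : EntrywiseNonneg A)
    (h : ∀ i j, T.Adj i j ↔ 0 < A i j) : T.IsPatternOf A :=
  fun i j => (h i j).trans (hA i j).lt_iff_ne'

theorem rank_eq_two_mul_starCoverNumber [Fintype V] [Field K] (hT : T.IsAcyclic)
    {A : Matrix V V K} (hA : A.IsSymm) (hpat : T.IsPatternOf A) :
    A.rank = 2 * starCoverNumber T := by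
  classical
  refine hT.leaf_induction (P := fun T => ∀ A : Matrix V V K, A.IsSymm → T.IsPatternOf A →
    A.rank = 2 * starCoverNumber T) ?_ ?_ A hA hpat
  · intro A _ hpat
    rw [hpat.eq_zero_of_eq_bot, rank_zero, starCoverNumber_bot]
  · intro G v w hvw hleaf ih A hA hpat
    rw [rank_eq_rank_zeroRowCol_add_two hA hvw.ne ((hpat v w).mp hvw)
      (hpat.apply_eq_zero G.irrefl) fun u hu => hpat.apply_eq_zero fun h => hu (hleaf u h),
      ih _ hA.zeroRowCol (hpat.deleteIncidenceSet w), starCoverNumber_eq_add_one_of_leaf hvw hleaf]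
    ring

theorem hasNonnegSymmFactorization_two_mul_starCoverNumber [Finite V] (hT : T.IsAcyclic)
    {A : Matrix V V ℝ} (hA : A.IsSymm) (hAnn : EntrywiseNonneg A) (hpat : T.IsPatternOf A) :
    HasNonnegSymmFactorization A (2 * starCoverNumber T) := by
  classical
  refine hT.leaf_induction (P := fun T => ∀ A : Matrix V V ℝ, A.IsSymm → EntrywiseNonneg A →
    T.IsPatternOf A → HasNonnegSymmFactorization A (2 * starCoverNumber T)) ?_ ?_ A hA hAnn hpat
  · intro A _ _ hpat
    rw [hpat.eq_zero_of_eq_bot, starCoverNumber_bot]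
    exact ⟨0, 0, fun _ _ => le_rfl, transpose_zero, fun _ _ => le_rfl, by simp⟩
  · intro G v w hvw hleaf ih A hA hAnn hpat
    rw [← zeroRowCol_add_vecMulVec_add_vecMulVec hA (hpat.apply_eq_zero G.irrefl), add_assoc,
      starCoverNumber_eq_add_one_of_leaf hvw hleaf, mul_add_one]
    exact (ih _ hA.zeroRowCol (hAnn.zeroRowCol w) (hpat.deleteIncidenceSet w)).add
      (hasNonnegSymmFactorization_vecMulVec_add_vecMulVec (Pi.single_nonneg.mpr zero_le_one)
        (hAnn w))

theorem stM_eq_two_mul_starCoverNumber [Fintype V] (hT : T.IsAcyclic) {A : Matrix V V ℝ}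
    (hA : A.IsSymm) (hAnn : EntrywiseNonneg A) (hpat : T.IsPatternOf A) :
    stM A = 2 * starCoverNumber T :=
  stM_eq_of_rank_eq (hasNonnegSymmFactorization_two_mul_starCoverNumber hT hA hAnn hpat)
    (rank_eq_two_mul_starCoverNumber hT hA hpat)

theorem rank_eq_st_eq_two_mul_starc_general {V : Type*} [Fintype V]
    (T : SimpleGraph V) (hT : T.IsAcyclic)
    (A : Matrix V V ℝ) (hAsymm : A.IsSymm) (hAnn : EntrywiseNonneg A)
    (hpattern : ∀ i j : V, T.Adj i j ↔ 0 < A i j) :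
    A.rank = stM A ∧ stM A = 2 * starCoverNumber T ∧
      stMGraph T.toLGraph = 2 * starCoverNumber T := by
  have hpat := isPatternOf_of_pos hAnn hpattern
  have hst := stM_eq_two_mul_starCoverNumber hT hAsymm hAnn hpat
  refine ⟨(rank_eq_two_mul_starCoverNumber hT hAsymm hpat).trans hst.symm, hst, ?_⟩
  have hvalues : {k | ∃ A : Matrix V V ℝ, A.IsSymm ∧ EntrywiseNonneg A ∧
      (∀ i j, T.toLGraph.Adj i j ↔ 0 < A i j) ∧ stM A = k} = {2 * starCoverNumber T} := by
    refine Set.eq_singleton_iff_unique_mem.mpr ⟨⟨A, hAsymm, hAnn, hpattern, hst⟩, ?_⟩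
    rintro _ ⟨B, hBs, hBn, hBpat, rfl⟩
    exact stM_eq_two_mul_starCoverNumber hT hBs hBn (isPatternOf_of_pos hBn hBpat)
  exact (congrArg sInf hvalues).trans (csInf_singleton _)

/-- Let `T` be a forest (loopless acyclic simple graph) and `A` any
symmetric entrywise-nonnegative matrix whose pattern graph is `T`. Then
`rank(A) = st₊(A) = 2 ⬝ starc(T)`; in particular `st₊(T) = 2 ⬝ starc(T)`, where
`starc` is the edge star cover number. -/
theorem rank_eq_st_eq_two_mul_starc {V : Type*} [Fintype V] [DecidableEq V]
    (T : SimpleGraph V) (hT : T.IsAcyclic)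
    (A : Matrix V V ℝ) (hAsymm : A.IsSymm) (hAnn : EntrywiseNonneg A)
    (hpattern : ∀ i j : V, T.Adj i j ↔ 0 < A i j) :
    A.rank = stM A ∧ stM A = 2 * starCoverNumber T ∧
      stMGraph T.toLGraph = 2 * starCoverNumber T :=
  rank_eq_st_eq_two_mul_starc_general T hT A hAsymm hAnn hpattern

end Forest

end LGraph
end
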